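/- arXiv:1405.3532 — 3 statements merged into one kernel-verified Lean document; each statement's English description precedes it below -/
import Mathlib

section
/- Let ℓ₀ ≥ 0 be an integer and c ∈ ℤ. Suppose s : ℕ → ℤ is a sequence such that for all ℓ ≥ ℓ₀ and all r with 0 ≤ r ≤ 2^ℓ − 1, one has s(2^ℓ + r) = s(r) + c if 2r ≤ 2^ℓ, and s(2^ℓ + r) = s(2^{ℓ+1} − r) if 2r > 2^ℓ. Then s is 2-regular. -/
/-!
Write `n ≥ 1` as `2 ^ m + r` with `r < 2 ^ m`. For `i ≥ l0` and `0 < j < 2 ^ i`, the hypothesis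
turns `u n = s (2 ^ i * n + j)` into `u r + c` when `2 r < 2 ^ m`, and otherwise into
`v (2 ^ (m + 1) - 1 - r)`, where `v n = s (2 ^ i * n + (2 ^ i - j))` is the reflected column.
So `(c, u, v)` solves a linear recursion that does not depend on `(i, j)`, and a solution is
determined by `c, u 0, u 1, v 0, v 1`: all these columns lie in a module of rank at most 5.
For `j = 0` the same kind of uniqueness gives `s (2 ^ i * n) = s (2 ^ l0 * n)`, and only finitely
many kernel sequences with `i ≤ l0` remain.
-/

/-- The 2-kernel of a sequence `s : ℕ → ℤ`. -/
def kernel2 (s : ℕ → ℤ) : Set (ℕ → ℤ) :=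
  {t | ∃ i j : ℕ, j < 2 ^ i ∧ t = fun n => s (2 ^ i * n + j)}

/-- A sequence is 2-regular if the ℤ-module spanned by its 2-kernel is finitely generated. -/
def IsTwoRegular (s : ℕ → ℤ) : Prop :=
  (Submodule.span ℤ (kernel2 s)).FG

theorem Nat.exists_eq_two_pow_add {n : ℕ} (hn : 0 < n) :
    ∃ m r, r < 2 ^ m ∧ n = 2 ^ m + r := by
  refine ⟨Nat.log 2 n, n - 2 ^ Nat.log 2 n, ?_, ?_⟩
  · have := Nat.lt_pow_succ_log_self one_lt_two n
    rw [pow_succ] at this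
    omega
  · have := Nat.pow_log_le_self 2 hn.ne'
    omega

section MirrorRecursion

variable {M : Type*} [AddCommMonoid M]

def MirrorRec (l0 : ℕ) (c : M) (u : ℕ → M) : Prop :=
  ∀ l, l0 ≤ l → ∀ r, r < 2 ^ l →
    u (2 ^ l + r) = if 2 * r ≤ 2 ^ l then u r + c else u (2 ^ (l + 1) - r)

def MirrorPairRec (c : M) (u v : ℕ → M) : Prop :=
  ∀ m, 1 ≤ m → ∀ r < 2 ^ m,
    u (2 ^ m + r) = if 2 * r < 2 ^ m then u r + c else v (2 ^ (m + 1) - 1 - r)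

theorem MirrorRec.eq_of_apply_zero {c : M} {u u' : ℕ → M}
    (hu : MirrorRec 0 c u) (hu' : MirrorRec 0 c u') (h0 : u 0 = u' 0) : u = u' := by
  funext n
  induction n using Nat.strong_induction_on with
  | _ n ih =>
    rcases Nat.eq_zero_or_pos n with rfl | hn
    · exact h0
    obtain ⟨m, r, hr, rfl⟩ := Nat.exists_eq_two_pow_add hn
    have hm : 2 ^ (m + 1) = 2 * 2 ^ m := pow_succ' 2 m
    rw [hu m m.zero_le r hr, hu' m m.zero_le r hr]
    split_ifs
    · rw [ih r (by omega)]
    · rw [ih _ (by omega)]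

theorem MirrorPairRec.eq_of_apply_zero_one {c : M} {u v u' v' : ℕ → M}
    (hu : MirrorPairRec c u v) (hv : MirrorPairRec c v u)
    (hu' : MirrorPairRec c u' v') (hv' : MirrorPairRec c v' u')
    (hu0 : u 0 = u' 0) (hu1 : u 1 = u' 1) (hv0 : v 0 = v' 0) (hv1 : v 1 = v' 1) :
    u = u' ∧ v = v' := by
  suffices ∀ n, u n = u' n ∧ v n = v' n from
    ⟨funext fun n => (this n).1, funext fun n => (this n).2⟩
  intro n
  induction n using Nat.strong_induction_on with
  | _ n ih =>
    match n with
    | 0 => exact ⟨hu0, hv0⟩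
    | 1 => exact ⟨hu1, hv1⟩
    | n + 2 =>
      obtain ⟨m, r, hr, hn⟩ := Nat.exists_eq_two_pow_add (n := n + 2) (by omega)
      have hm : 1 ≤ m := Nat.one_le_iff_ne_zero.mpr fun h => by subst h; omega
      have hm' : 2 ^ (m + 1) = 2 * 2 ^ m := pow_succ' 2 m
      rw [hn, hu m hm r hr, hv m hm r hr, hu' m hm r hr, hv' m hm r hr]
      split_ifs
      · rw [(ih r (by omega)).1, (ih r (by omega)).2]
        exact ⟨rfl, rfl⟩
      · rw [(ih _ (by omega)).1, (ih _ (by omega)).2]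
        exact ⟨rfl, rfl⟩

theorem MirrorPairRec.zero : MirrorPairRec (0 : M) 0 0 := by
  intro m _ r _
  simp

theorem MirrorPairRec.add {c c' : M} {u v u' v' : ℕ → M} (h : MirrorPairRec c u v)
    (h' : MirrorPairRec c' u' v') : MirrorPairRec (c + c') (u + u') (v + v') := by
  intro m hm r hr
  simp only [Pi.add_apply, h m hm r hr, h' m hm r hr]
  split_ifs <;> abel

theorem MirrorPairRec.smul {R : Type*} [Semiring R] [Module R M] (a : R) {c : M} {u v : ℕ → M}
    (h : MirrorPairRec c u v) : MirrorPairRec (a • c) (a • u) (a • v) := by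
  intro m hm r hr
  simp only [Pi.smul_apply, h m hm r hr]
  split_ifs
  · exact smul_add a _ _
  · rfl

end MirrorRecursion

def mirrorPairSolutions (R M : Type*) [Semiring R] [AddCommMonoid M] [Module R M] :
    Submodule R (M × (ℕ → M) × (ℕ → M)) where
  carrier := {p | MirrorPairRec p.1 p.2.1 p.2.2 ∧ MirrorPairRec p.1 p.2.2 p.2.1}
  add_mem' := fun ⟨hu, hv⟩ ⟨hu', hv'⟩ => ⟨hu.add hu', hv.add hv'⟩
  zero_mem' := ⟨.zero, .zero⟩
  smul_mem' := fun a _ ⟨hu, hv⟩ => ⟨hu.smul a, hv.smul a⟩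

theorem mirrorPairSolutions_fg (R M : Type*) [Ring R] [AddCommGroup M] [Module R M]
    [IsNoetherian R M] : (mirrorPairSolutions R M).FG := by
  let initialValues : mirrorPairSolutions R M →ₗ[R] M × M × M × M × M :=
    { toFun := fun p => (p.1.1, p.1.2.1 0, p.1.2.1 1, p.1.2.2 0, p.1.2.2 1)
      map_add' := fun _ _ => rfl
      map_smul' := fun _ _ => rfl }
  refine Module.Finite.iff_fg.mp (Module.Finite.of_injective initialValues ?_)
  rintro ⟨⟨c, u, v⟩, hu, hv⟩ ⟨⟨c', u', v'⟩, hu', hv'⟩ h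
  simp only [initialValues, LinearMap.coe_mk, AddHom.coe_mk, Prod.mk.injEq] at h
  obtain ⟨rfl, hu0, hu1, hv0, hv1⟩ := h
  obtain ⟨rfl, rfl⟩ := hu.eq_of_apply_zero_one hv hu' hv' hu0 hu1 hv0 hv1
  rfl

section KernelColumns

variable {M : Type*} [AddCommMonoid M] {l0 : ℕ} {c : M} {s : ℕ → M}

theorem MirrorRec.comp_two_pow_mul (hs : MirrorRec l0 c s) {i : ℕ} (hi : l0 ≤ i) :
    MirrorRec 0 c fun n => s (2 ^ i * n) := by
  intro m _ r hr
  have ha : 0 < 2 ^ i := by positivity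
  have e1 : 2 ^ (i + m) = 2 ^ i * 2 ^ m := pow_add 2 i m
  have e2 : 2 ^ (i + m + 1) = 2 ^ i * 2 ^ (m + 1) := by rw [add_assoc, pow_add]
  have key := hs (i + m) (by omega) (2 ^ i * r) (e1 ▸ Nat.mul_lt_mul_of_pos_left hr ha)
  simp only [e2, e1, ← Nat.mul_sub, mul_left_comm 2, Nat.mul_le_mul_left_iff ha] at key
  simpa only [mul_add] using key

theorem MirrorRec.mirrorPairRec_comp_two_pow_mul_add (hs : MirrorRec l0 c s) {i j : ℕ}
    (hi : l0 ≤ i) (hj0 : 0 < j) (hj : j < 2 ^ i) :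
    MirrorPairRec c (fun n => s (2 ^ i * n + j)) (fun n => s (2 ^ i * n + (2 ^ i - j))) := by
  intro m hm r hr
  obtain ⟨b, hb⟩ : ∃ b, 2 ^ m = b + b :=
    ⟨2 ^ (m - 1), by rw [← two_mul, ← pow_succ']; congr 1; omega⟩
  have e1 : 2 ^ (i + m) = 2 ^ i * b + 2 ^ i * b := by rw [pow_add, hb, mul_add]
  have e2 : 2 ^ (i + m + 1) = 2 ^ i * (2 ^ (m + 1) - 1 - r) + 2 ^ i * r + 2 ^ i := by
    have : 2 ^ (m + 1) - 1 - r + r + 1 = 2 ^ (m + 1) := by rw [pow_succ]; omega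
    conv_lhs => rw [add_assoc i, pow_add, ← this]
    ring
  have hlt : ∀ {k}, r < k → 2 ^ i * r + 2 ^ i ≤ 2 ^ i * k := fun {k} h => by
    simpa only [mul_add, mul_one] using Nat.mul_le_mul_left (2 ^ i) (show r + 1 ≤ k from h)
  have hge : b ≤ r → 2 ^ i * b ≤ 2 ^ i * r := Nat.mul_le_mul_left _
  have hx : 2 ^ i * r + j < 2 ^ (i + m) := by
    have := hlt (k := b + b) (by omega)
    rw [mul_add] at this
    omega
  show s (2 ^ i * (2 ^ m + r) + j) = if 2 * r < 2 ^ m then s (2 ^ i * r + j) + c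
    else s (2 ^ i * (2 ^ (m + 1) - 1 - r) + (2 ^ i - j))
  rw [show 2 ^ i * (2 ^ m + r) + j = 2 ^ (i + m) + (2 ^ i * r + j) by rw [e1, mul_add, hb]; ring,
    hs (i + m) (by omega) _ hx]
  refine if_congr ?_ rfl (by rw [e2]; congr 1; omega)
  -- `2 ^ m = b + b` is even and `0 < j < 2 ^ i`, so both conditions say `r < b`.
  have := @hlt b
  by_cases r < b <;> omega

theorem MirrorRec.mem_mirrorPairSolutions {R : Type*} [Semiring R] [Module R M]
    (hs : MirrorRec l0 c s) {i j : ℕ}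
    (hi : l0 ≤ i) (hj0 : 0 < j) (hj : j < 2 ^ i) :
    (c, (fun n => s (2 ^ i * n + j)), fun n => s (2 ^ i * n + (2 ^ i - j))) ∈
      mirrorPairSolutions R M := by
  refine ⟨hs.mirrorPairRec_comp_two_pow_mul_add hi hj0 hj, ?_⟩
  simpa only [Nat.sub_sub_self hj.le] using
    hs.mirrorPairRec_comp_two_pow_mul_add hi (Nat.sub_pos_of_lt hj) (Nat.sub_lt (by positivity) hj0)

end KernelColumns

theorem stmt0 (l0 : ℕ) (c : ℤ) (s : ℕ → ℤ)
    (hrec : ∀ l, l0 ≤ l → ∀ r, r < 2 ^ l →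
      s (2 ^ l + r) = if 2 * r ≤ 2 ^ l then s r + c else s (2 ^ (l + 1) - r)) :
    IsTwoRegular s := by
  have hs : MirrorRec l0 c s := hrec
  let column : ℕ × ℕ → ℕ → ℤ := fun p n => s (2 ^ p.1 * n + p.2)
  let low : Set (ℕ → ℤ) := column '' (Set.Iic l0 ×ˢ Set.Iio (2 ^ l0))
  have hlow {i j : ℕ} (hi : i ≤ l0) (hj : j < 2 ^ l0) : column (i, j) ∈ low :=
    Set.mem_image_of_mem _ ⟨hi, hj⟩
  have hlow_fin : low.Finite := ((Set.finite_Iic _).prod (Set.finite_Iio _)).image _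
  let secondSlot := LinearMap.fst ℤ (ℕ → ℤ) (ℕ → ℤ) ∘ₗ LinearMap.snd ℤ ℤ _
  refine ((Submodule.fg_span hlow_fin).sup ((mirrorPairSolutions_fg ℤ ℤ).map secondSlot)).of_le
    (Submodule.span_le.mpr ?_)
  rintro _ ⟨i, j, hj, rfl⟩
  rcases le_or_gt i l0 with hi | hi
  · exact Submodule.mem_sup_left (Submodule.subset_span
      (hlow hi (hj.trans_le (Nat.pow_le_pow_right two_pos hi))))
  rcases Nat.eq_zero_or_pos j with rfl | hj0
  · have hcol : column (i, 0) = column (l0, 0) := by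
      simpa only [column, add_zero] using
        (hs.comp_two_pow_mul hi.le).eq_of_apply_zero (hs.comp_two_pow_mul le_rfl) (by simp)
    refine Submodule.mem_sup_left (Submodule.subset_span ?_)
    exact (hcol ▸ hlow le_rfl (by positivity) : column (i, 0) ∈ low)
  · exact Submodule.mem_sup_right ⟨_, hs.mem_mirrorPairSolutions hi.le hj0 hj, rfl⟩
end

section
/- If n is even, then M₀(n), m₀(n) and Δ₀(n) are all even. -/
/-- A sequence is 2-automatic if its 2-kernel is finite. -/
def IsTwoAutomatic (s : ℕ → ℤ) : Prop :=
  (kernel2 s).Finite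

/-- The period-doubling word, fixed point (starting with 0) of 0 ↦ 01, 1 ↦ 00:
its `n`-th letter is the parity of the 2-adic valuation of `n+1`. -/
def pd (n : ℕ) : ℕ := (n + 1).factorization 2 % 2

/-- The Thue–Morse word, fixed point (starting with 0) of 0 ↦ 01, 1 ↦ 10:
its `n`-th letter is the parity of the binary digit sum of `n`. -/
def tm (n : ℕ) : ℕ := (Nat.digits 2 n).sum % 2

/-- The 2-block coding `x = block(p, 2)` of the period-doubling word. -/
def xw (n : ℕ) : ℕ := 2 * pd n + pd (n + 1)

/-- The 2-block coding `y = block(t, 2)` of the Thue–Morse word. -/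
def yw (n : ℕ) : ℕ := 2 * tm n + tm (n + 1)

/-- The factor of an infinite word `w` of length `len` occurring at position `i`. -/
def factorAt (w : ℕ → ℕ) (i len : ℕ) : List ℕ :=
  (List.range len).map fun k => w (i + k)

/-- `u` is a factor of the infinite word `w`. -/
def IsFactor (w : ℕ → ℕ) (u : List ℕ) : Prop :=
  ∃ i, u = factorAt w i u.length

/-- Maximal number of 0's in a factor of `x` of length `n`. -/
noncomputable def M0 (n : ℕ) : ℕ := sSup {k | ∃ i, (factorAt xw i n).count 0 = k}

/-- Minimal number of 0's in a factor of `x` of length `n`. -/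
noncomputable def m0 (n : ℕ) : ℕ := sInf {k | ∃ i, (factorAt xw i n).count 0 = k}

noncomputable def D0 (n : ℕ) : ℕ := M0 n - m0 n

/-- Maximal number of 2's in a factor of `x` of length `n`. -/
noncomputable def M2c (n : ℕ) : ℕ := sSup {k | ∃ i, (factorAt xw i n).count 2 = k}

/-- Minimal number of 2's in a factor of `x` of length `n`. -/
noncomputable def m2c (n : ℕ) : ℕ := sInf {k | ∃ i, (factorAt xw i n).count 2 = k}

/-- The max-jump function for `M0`. -/
noncomputable def JM0 : ℕ → ℕ
  | 0 => 0
  | n + 1 => if M0 n < M0 (n + 1) then 1 else 0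

/-- The min-jump function for `m0`. -/
noncomputable def jm0 (n : ℕ) : ℕ := if m0 n < m0 (n + 1) then 1 else 0

/-- Maximal total number of 1's and 2's in a factor of `y` of length `n`. -/
noncomputable def M12 (n : ℕ) : ℕ :=
  sSup {k | ∃ i, (factorAt yw i n).count 1 + (factorAt yw i n).count 2 = k}

/-- Minimal total number of 1's and 2's in a factor of `y` of length `n`. -/
noncomputable def m12 (n : ℕ) : ℕ :=
  sInf {k | ∃ i, (factorAt yw i n).count 1 + (factorAt yw i n).count 2 = k}

noncomputable def D12 (n : ℕ) : ℕ := M12 n - m12 n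

/-- Maximal total number of 0's and 3's in a factor of `y` of length `n`. -/
noncomputable def M03 (n : ℕ) : ℕ :=
  sSup {k | ∃ i, (factorAt yw i n).count 0 + (factorAt yw i n).count 3 = k}

/-- Minimal total number of 0's and 3's in a factor of `y` of length `n`. -/
noncomputable def m03 (n : ℕ) : ℕ :=
  sInf {k | ∃ i, (factorAt yw i n).count 0 + (factorAt yw i n).count 3 = k}

/-- The max-jump function for `M03`. -/
noncomputable def JM03 (n : ℕ) : ℕ := if M03 (n - 1) < M03 n then 1 else 0

/-- The min-jump function for `m03`. -/
noncomputable def jm03 (n : ℕ) : ℕ := if m03 n < m03 (n + 1) then 1 else 0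

/-- Abelian complexity: the number of abelian equivalence classes (i.e. distinct
multisets of letters) of factors of `w` of length `n`. -/
noncomputable def abComplexity (w : ℕ → ℕ) (n : ℕ) : ℕ :=
  Set.ncard {m : Multiset ℕ | ∃ i, (↑(factorAt w i n) : Multiset ℕ) = m}

/-- The number of occurrences of `v` as a factor of `u`. -/
def countFactor (u v : List ℕ) : ℕ :=
  ((List.range (u.length + 1 - v.length)).filter
    fun i => decide ((u.drop i).take v.length = v)).length

/-- 2-abelian complexity: the number of 2-abelian equivalence classes of factors of `w`
of length `n`, where two words are 2-abelian equivalent when every word of length at most 2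
occurs equally often in both. -/
noncomputable def abel2Complexity (w : ℕ → ℕ) (n : ℕ) : ℕ :=
  Set.ncard {f : List ℕ → ℕ |
    ∃ i, f = fun v => if v.length ≤ 2 then countFactor (factorAt w i n) v else 0}

/-- The morphism φ : 0 ↦ 12, 1 ↦ 12, 2 ↦ 00. -/
def phiL : ℕ → List ℕ
  | 0 => [1, 2]
  | 1 => [1, 2]
  | 2 => [0, 0]
  | _ => []

/-- The morphism τ : 0 ↦ 0, 1 ↦ 2, 2 ↦ 1. -/
def tauL : ℕ → ℕ
  | 1 => 2
  | 2 => 1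
  | n => n

/-!
Since `p (2k) = 0`, the letters `x (2k) = p (2k+1)` and `x (2k+1) = 2 p (2k+1)` are both zero
or both nonzero: the zeros of `x` come in aligned pairs.
Hence a factor of even length starting at an even position contains an even number of zeros.
Moving the start of a factor of even length from `2j` to `2j+1` and then to `2j+2` changes its
number of zeros twice by the same amount, so the count at an odd position is the average of the
counts at its two even neighbours. An odd position can therefore carry an extremal count only if
its even neighbours carry the same count, so the extremal counts `M₀ n` and `m₀ n` are even.
-/

open Set

lemma factorAt_succ (w : ℕ → ℕ) (i n : ℕ) :
    factorAt w i (n + 1) = factorAt w i n ++ [w (i + n)] := by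
  simp [factorAt, List.range_succ]

lemma factorAt_succ_eq_cons (w : ℕ → ℕ) (i n : ℕ) :
    factorAt w i (n + 1) = w i :: factorAt w (i + 1) n := by
  simp [factorAt, List.range_succ_eq_map, Nat.add_assoc, Nat.add_comm 1]

section PairedLetter

variable {w : ℕ → ℕ} {a : ℕ}

lemma count_factorAt_shift (i n : ℕ) :
    (factorAt w (i + 1) n).count a + (if w i = a then 1 else 0) =
      (factorAt w i n).count a + (if w (i + n) = a then 1 else 0) := by
  have hright := congrArg (List.count a) (factorAt_succ w i n)
  have hleft := congrArg (List.count a) (factorAt_succ_eq_cons w i n)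
  simp only [List.count_append, List.count_cons, List.count_nil, beq_iff_eq] at hright hleft
  omega

variable (hw : ∀ k, w (2 * k) = a ↔ w (2 * k + 1) = a)
include hw

lemma even_count_factorAt_two_mul (j k : ℕ) : Even ((factorAt w (2 * j) (2 * k)).count a) := by
  induction k with
  | zero => simp [factorAt]
  | succ k ih =>
    have hpair : (if w (2 * (j + k)) = a then 1 else 0) =
        (if w (2 * (j + k) + 1) = a then 1 else 0) := if_congr (hw (j + k)) rfl rfl
    rw [show 2 * (k + 1) = 2 * k + 1 + 1 by ring, factorAt_succ, factorAt_succ]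
    simp only [List.count_append, List.count_singleton, beq_iff_eq]
    rw [show 2 * j + (2 * k + 1) = 2 * (j + k) + 1 by ring,
      show 2 * j + 2 * k = 2 * (j + k) by ring, ← hpair, add_assoc]
    exact ih.add ⟨_, rfl⟩

lemma two_mul_count_factorAt_odd (j k : ℕ) :
    2 * (factorAt w (2 * j + 1) (2 * k)).count a =
      (factorAt w (2 * j) (2 * k)).count a + (factorAt w (2 * j + 2) (2 * k)).count a := by
  have hfirst := count_factorAt_shift (w := w) (a := a) (2 * j) (2 * k)
  have hsecond := count_factorAt_shift (w := w) (a := a) (2 * j + 1) (2 * k)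
  rw [show 2 * j + 2 * k = 2 * (j + k) by ring] at hfirst
  rw [show 2 * j + 1 + 2 * k = 2 * (j + k) + 1 by ring, show 2 * j + 1 + 1 = 2 * j + 2 by ring]
    at hsecond
  have hstart : (if w (2 * j) = a then 1 else 0) = (if w (2 * j + 1) = a then 1 else 0) :=
    if_congr (hw j) rfl rfl
  have hend : (if w (2 * (j + k)) = a then 1 else 0) =
      (if w (2 * (j + k) + 1) = a then 1 else 0) := if_congr (hw (j + k)) rfl rfl
  omega

end PairedLetter

section ExtremaOfAveragedSequence

variable {f : ℕ → ℕ} (heven : ∀ j, Even (f (2 * j)))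
  (havg : ∀ j, 2 * f (2 * j + 1) = f (2 * j) + f (2 * j + 2))
include heven havg

lemma even_of_isExtrOn_univ {i : ℕ} (hi : IsExtrOn f univ i) : Even (f i) := by
  obtain ⟨j, rfl | rfl⟩ := Nat.even_or_odd' i
  · exact heven j
  · have hneighbours : f (2 * j) = f (2 * j + 1) := by
      have := havg j
      rcases hi with hmin | hmax
      · have := isMinOn_univ_iff.mp hmin (2 * j)
        have := isMinOn_univ_iff.mp hmin (2 * j + 2)
        omega
      · have := isMaxOn_univ_iff.mp hmax (2 * j)
        have := isMaxOn_univ_iff.mp hmax (2 * j + 2)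
        omega
    exact hneighbours ▸ heven j

lemma even_sSup_range (hbdd : BddAbove (range f)) : Even (sSup (range f)) := by
  obtain ⟨i, hi⟩ := Nat.sSup_mem (range_nonempty f) hbdd
  rw [← hi]
  exact even_of_isExtrOn_univ heven havg <| .inr <| isMaxOn_univ_iff.mpr fun i' =>
    hi ▸ le_csSup hbdd (mem_range_self i')

lemma even_sInf_range : Even (sInf (range f)) := by
  obtain ⟨i, hi⟩ := Nat.sInf_mem (range_nonempty f)
  rw [← hi]
  exact even_of_isExtrOn_univ heven havg <| .inl <| isMinOn_univ_iff.mpr fun i' =>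
    hi ▸ Nat.sInf_le (mem_range_self i')

end ExtremaOfAveragedSequence

lemma pd_two_mul (k : ℕ) : pd (2 * k) = 0 := by
  simp [pd, Nat.factorization_eq_zero_of_not_dvd (by omega : ¬2 ∣ 2 * k + 1)]

lemma xw_two_mul_eq_zero_iff (k : ℕ) : xw (2 * k) = 0 ↔ xw (2 * k + 1) = 0 := by
  have hnext : pd (2 * k + 1 + 1) = 0 := pd_two_mul (k + 1)
  simp only [xw, pd_two_mul, hnext]
  omega

theorem stmt2 (n : ℕ) (hn : Even n) :
    Even (M0 n) ∧ Even (m0 n) ∧ Even (D0 n) := by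
  obtain ⟨k, rfl⟩ := hn
  rw [← two_mul]
  have heven (j : ℕ) := even_count_factorAt_two_mul xw_two_mul_eq_zero_iff j k
  have havg (j : ℕ) := two_mul_count_factorAt_odd xw_two_mul_eq_zero_iff j k
  have hM : Even (M0 (2 * k)) := even_sSup_range heven havg
    ⟨2 * k, forall_mem_range.mpr fun i => (List.count_le_length ..).trans (by simp [factorAt])⟩
  have hm : Even (m0 (2 * k)) := even_sInf_range heven havg
  exact ⟨hM, hm, hM.tsub hm⟩
end

section
/- Let τ be the morphism on {0,1,2}* defined by τ(0)=0, τ(1)=2, τ(2)=1. If w is a factor of x, then the reversal of τ(w) is also a factor of x. -/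
/-!
Since `v₂(2ᵏ - m) = v₂(m)` for `0 < m < 2ᵏ`, the prefix of length `2ᵏ - 1` of the
period-doubling word `p` is a palindrome. In the 2-block coding this reflection swaps the two
letters of each block, i.e. `x(2ᵏ - 3 - n) = τ(x(n))`. A factor of `x` at position `i` therefore
reappears, reversed and mapped by `τ`, at the mirrored position in every long enough prefix.
-/

namespace Nat

theorem factorization_le_of_add_eq_pow {p k a b : ℕ} (hp : p.Prime) (ha : 0 < a) (hb : 0 < b)
    (hab : a + b = p ^ k) : a.factorization p ≤ b.factorization p := by
  have hdvd_a : p ^ a.factorization p ∣ a := ordProj_dvd a p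
  have hle : a.factorization p ≤ k :=
    (pow_le_pow_iff_right₀ hp.one_lt).mp ((le_of_dvd ha hdvd_a).trans (by omega))
  have hdvd_b : p ^ a.factorization p ∣ b := by
    rw [show b = p ^ k - a by omega]
    exact Nat.dvd_sub (pow_dvd_pow p hle) hdvd_a
  exact (hp.pow_dvd_iff_le_factorization hb.ne').mp hdvd_b

theorem factorization_pow_sub {p k m : ℕ} (hp : p.Prime) (h0 : 0 < m) (h : m < p ^ k) :
    (p ^ k - m).factorization p = m.factorization p :=
  le_antisymm (factorization_le_of_add_eq_pow (k := k) hp (by omega) h0 (by omega))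
    (factorization_le_of_add_eq_pow (k := k) hp h0 (by omega) (by omega))

end Nat

theorem pd_two_pow_sub {k t : ℕ} (h : t + 2 ≤ 2 ^ k) : pd (2 ^ k - 2 - t) = pd t := by
  rw [pd, pd, show 2 ^ k - 2 - t + 1 = 2 ^ k - (t + 1) by omega,
    Nat.factorization_pow_sub Nat.prime_two (by omega) (by omega)]

theorem pd_le_one (n : ℕ) : pd n ≤ 1 := by
  unfold pd; omega

theorem xw_two_pow_sub {k n : ℕ} (h : n + 3 ≤ 2 ^ k) : xw (2 ^ k - 3 - n) = tauL (xw n) := by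
  have hn : pd (2 ^ k - 2 - (n + 1)) = pd (n + 1) := pd_two_pow_sub (by omega)
  have hn1 : pd (2 ^ k - 2 - n) = pd n := pd_two_pow_sub (by omega)
  rw [xw, xw, show 2 ^ k - 3 - n = 2 ^ k - 2 - (n + 1) by omega,
    show 2 ^ k - 2 - (n + 1) + 1 = 2 ^ k - 2 - n by omega, hn, hn1]
  have := pd_le_one n
  have := pd_le_one (n + 1)
  interval_cases pd n <;> interval_cases pd (n + 1) <;> rfl

theorem factorAt_length (w : ℕ → ℕ) (i len : ℕ) : (factorAt w i len).length = len := by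
  simp [factorAt]

theorem reverse_map_factorAt_of_reflect {w f : ℕ → ℕ} {c : ℕ}
    (hc : ∀ n ≤ c, w (c - n) = f (w n)) {i L : ℕ} (hiL : i + L ≤ c + 1) :
    ((factorAt w i L).map f).reverse = factorAt w (c + 1 - i - L) L := by
  apply List.ext_getElem (by simp [factorAt_length])
  intro n hn _
  simp only [List.length_reverse, List.length_map, factorAt_length] at hn
  simp only [factorAt, List.getElem_reverse, List.getElem_map, List.getElem_range,
    List.length_map, List.length_range]
  rw [← hc _ (by omega)]
  congr 1
  omega

theorem IsFactor.reverse_map_of_reflect {w f : ℕ → ℕ}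
    (hw : ∀ N, ∃ c ≥ N, ∀ n ≤ c, w (c - n) = f (w n)) {u : List ℕ} (hu : IsFactor w u) :
    IsFactor w (u.map f).reverse := by
  obtain ⟨i, hi⟩ := hu
  obtain ⟨c, hc, hreflect⟩ := hw (i + u.length)
  refine ⟨c + 1 - i - u.length, ?_⟩
  rw [hi, reverse_map_factorAt_of_reflect hreflect (by omega)]
  simp [factorAt_length]

theorem xw_reflect (N : ℕ) : ∃ c ≥ N, ∀ n ≤ c, xw (c - n) = tauL (xw n) := by
  have hN : N + 3 ≤ 2 ^ (N + 2) := by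
    have := Nat.lt_two_pow_self (n := N)
    rw [pow_add]; omega
  exact ⟨2 ^ (N + 2) - 3, by omega, fun n hn => xw_two_pow_sub (by omega)⟩

theorem stmt8 (w : List ℕ) (hw : IsFactor xw w) :
    IsFactor xw ((w.map tauL).reverse) :=
  hw.reverse_map_of_reflect xw_reflect
end
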